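/- Minimizers are constant on spanning trees: let S ⊆ V induce a connected subgraph with U(1)-signature σ. If τ: S → U(1) attains the minimum ι^σ(S) = ∑_{{x,y}∈E_S} w_{xy}|σ_{xy}τ(y) − τ(x)|, then there exists a spanning tree T of the induced subgraph on S such that σ_{xy}τ(y) = τ(x) for every oriented edge (x,y) of T. -/

import Mathlib

open Finset

noncomputable section

variable {V : Type*} [Fintype V] [DecidableEq V]

/-- The value `∑_{{x,y} ∈ E_S} w_{xy} |σ_{xy} τ(y) - τ(x)|` (edges counted via
ordered pairs and halved). -/
def frustVal (w : V → V → ℝ) (σ : V → V → ℂ) (S : Finset V) (τ : V → ℂ) : ℝ :=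
  (1 / 2) * ∑ x ∈ S, ∑ y ∈ S, w x y * ‖σ x y * τ y - τ x‖

/-- The induced subgraph on `S` is connected. -/
def ConnOn (w : V → V → ℝ) (S : Finset V) : Prop :=
  ∀ x ∈ S, ∀ y ∈ S,
    Relation.ReflTransGen (fun a b => a ∈ S ∧ b ∈ S ∧ a ≠ b ∧ w a b ≠ 0) x y

open Complex SimpleGraph

lemma norm_exp_sub_exp (a b : ℝ) :
    ‖Complex.exp (a * I) - Complex.exp (b * I)‖ = 2 * |Real.sin ((a - b) / 2)| := by
  have ha : (a : ℂ) * I = (((a + b) / 2 : ℝ) : ℂ) * I + (((a - b) / 2 : ℝ) : ℂ) * I := by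
    push_cast; ring
  have hb : (b : ℂ) * I = (((a + b) / 2 : ℝ) : ℂ) * I - (((a - b) / 2 : ℝ) : ℂ) * I := by
    push_cast; ring
  have hsin : Complex.exp ((((a - b) / 2 : ℝ) : ℂ) * I) -
      Complex.exp (-((((a - b) / 2 : ℝ) : ℂ) * I)) =
      2 * I * Complex.sin (((a - b) / 2 : ℝ) : ℂ) := by
    rw [Complex.sin]; ring_nf; rw [Complex.I_sq]; ring
  rw [ha, hb, Complex.exp_add, sub_eq_add_neg (_ * I), Complex.exp_add, ← mul_sub]
  rw [hsin]
  rw [norm_mul]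
  rw [Complex.norm_exp_ofReal_mul_I]
  rw [one_mul, ← Complex.ofReal_sin]
  rw [norm_mul, norm_mul, Complex.norm_real, Real.norm_eq_abs]
  simp

lemma key_lemma (v : ℂ) (hv : ‖v‖ = 1) (hv1 : v ≠ 1) :
    ∃ δ : ℝ, 0 < δ ∧ ∀ θ : ℝ, 0 < θ → θ < δ →
      ‖v - Complex.exp (θ * I)‖ + ‖v - Complex.exp ((-θ : ℝ) * I)‖ < 2 * ‖v - 1‖ := by
  have habs : ‖v‖ = 1 := hv
  have hargne : v.arg ≠ 0 := by
    intro h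
    apply hv1
    have := Complex.norm_mul_exp_arg_mul_I v
    rw [h, habs] at this
    simpa using this.symm
  obtain ⟨φ, hφ0, hφ2, hφv⟩ : ∃ φ : ℝ, 0 < φ ∧ φ < 2 * Real.pi ∧ v = Complex.exp (φ * I) := by
    rcases lt_or_ge 0 v.arg with h | h
    · refine ⟨v.arg, h, ?_, ?_⟩
      · linarith [Complex.arg_le_pi v, Real.pi_pos]
      · have := Complex.norm_mul_exp_arg_mul_I v
        rw [habs] at this; simpa using this.symm
    · have hlt : - Real.pi < v.arg := Complex.neg_pi_lt_arg v
      have hneg : v.arg < 0 := lt_of_le_of_ne h hargne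
      refine ⟨v.arg + 2 * Real.pi, by linarith, by linarith, ?_⟩
      have := Complex.norm_mul_exp_arg_mul_I v
      rw [habs] at this
      push_cast
      rw [add_mul, Complex.exp_add, Complex.exp_two_pi_mul_I, mul_one]
      simpa using this.symm
  refine ⟨min φ (2 * Real.pi - φ), lt_min hφ0 (by linarith), fun θ hθ0 hθδ => ?_⟩
  have hθφ : θ < φ := lt_of_lt_of_le hθδ (min_le_left _ _)
  have hθφ' : θ < 2 * Real.pi - φ := lt_of_lt_of_le hθδ (min_le_right _ _)
  have e1 : ‖v - Complex.exp (θ * I)‖ = 2 * Real.sin ((φ - θ) / 2) := by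
    rw [hφv, norm_exp_sub_exp, abs_of_pos]
    exact Real.sin_pos_of_pos_of_lt_pi (by linarith) (by linarith)
  have e2 : ‖v - Complex.exp ((-θ : ℝ) * I)‖ = 2 * Real.sin ((φ + θ) / 2) := by
    rw [hφv, norm_exp_sub_exp]
    rw [show (φ - -θ) / 2 = (φ + θ) / 2 by ring, abs_of_pos]
    exact Real.sin_pos_of_pos_of_lt_pi (by linarith) (by linarith)
  have e3 : ‖v - 1‖ = 2 * Real.sin (φ / 2) := by
    have h1 : (1 : ℂ) = Complex.exp ((0 : ℝ) * I) := by simp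
    rw [hφv, h1, norm_exp_sub_exp]
    rw [show (φ - 0) / 2 = φ / 2 by ring, abs_of_pos]
    exact Real.sin_pos_of_pos_of_lt_pi (by linarith) (by linarith)
  rw [e1, e2, e3]
  have hcc := strictConcaveOn_sin_Icc.2
    (Set.mem_Icc.2 ⟨by linarith, by linarith⟩) (Set.mem_Icc.2 ⟨by linarith, by linarith⟩)
    (show (φ - θ) / 2 ≠ (φ + θ) / 2 by intro h; nlinarith)
    (show (0:ℝ) < 1/2 by norm_num) (show (0:ℝ) < 1/2 by norm_num) (by norm_num)
  have heq : (1/2 : ℝ) • ((φ - θ) / 2) + (1/2 : ℝ) • ((φ + θ) / 2) = φ / 2 := by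
    simp only [smul_eq_mul]; ring
  rw [heq] at hcc
  simp only [smul_eq_mul] at hcc
  linarith

lemma no_bad_cut (w : V → V → ℝ) (σ : V → V → ℂ)
    (hw_symm : ∀ x y, w x y = w y x)
    (hw_nn : ∀ x y, 0 ≤ w x y)
    (hσu : ∀ x y, ‖σ x y‖ = 1)
    (hσs : ∀ x y, σ y x = (σ x y)⁻¹)
    (S : Finset V)
    (τ0 : V → ℂ) (hτ0 : ∀ x, ‖τ0 x‖ = 1)
    (hmin : ∀ τ : V → ℂ, (∀ x, ‖τ x‖ = 1) →
      frustVal w σ S τ0 ≤ frustVal w σ S τ)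
    (A : Finset V) (hA : A ⊆ S)
    (hclosed : ∀ x ∈ A, ∀ y ∈ S, y ∉ A → w x y ≠ 0 → σ x y * τ0 y ≠ τ0 x)
    {x y : V} (hx : x ∈ A) (hy : y ∈ S) (hyA : y ∉ A) (hw : w x y ≠ 0) : False := by
  classical
  have hτne : ∀ z, τ0 z ≠ 0 := fun z =>
    norm_ne_zero_iff.1 (by rw [hτ0]; exact one_ne_zero)
  have hσne : ∀ a b, σ a b ≠ 0 := fun a b =>
    norm_ne_zero_iff.1 (by rw [hσu]; exact one_ne_zero)
  set vc : V → V → ℂ := fun a b => σ a b * τ0 b * (τ0 a)⁻¹ with hvc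
  have hvnorm : ∀ a b, ‖vc a b‖ = 1 := by
    intro a b
    simp [hvc, norm_mul, norm_inv, hσu, hτ0]
  have hnorm_eq : ∀ (a b : V) (u : ℂ), ‖σ a b * τ0 b - u * τ0 a‖ = ‖vc a b - u‖ := by
    intro a b u
    have hne := hτne a
    have : vc a b - u = (σ a b * τ0 b - u * τ0 a) * (τ0 a)⁻¹ := by
      rw [hvc]; field_simp
    rw [this, norm_mul, norm_inv, hτ0, inv_one, mul_one]
  have hv1_iff : ∀ a b, vc a b = 1 ↔ σ a b * τ0 b = τ0 a := by
    intro a b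
    rw [hvc]
    exact mul_inv_eq_one₀ (hτne a)
  -- unsatisfied in reverse direction
  have hrev : ∀ a b, a ∉ A → a ∈ S → b ∈ A → w a b ≠ 0 → vc a b ≠ 1 := by
    intro a b haA haS hbA hwab h1
    have h2 : σ a b * τ0 b = τ0 a := (hv1_iff a b).1 h1
    have h3 : σ b a * τ0 a = τ0 b := by
      rw [hσs, ← h2]
      field_simp [hσne a b]
    exact hclosed b hbA a haS haA (by rw [← hw_symm]; exact hwab) h3
  -- choose δ for each pair
  have hkey : ∀ p : V × V, ∃ δ : ℝ, 0 < δ ∧ ∀ θ : ℝ, 0 < θ → θ < δ →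
      vc p.1 p.2 ≠ 1 →
      ‖vc p.1 p.2 - Complex.exp (θ * I)‖ + ‖vc p.1 p.2 - Complex.exp ((-θ : ℝ) * I)‖ <
        2 * ‖vc p.1 p.2 - 1‖ := by
    intro p
    by_cases h : vc p.1 p.2 = 1
    · exact ⟨1, one_pos, fun θ _ _ h1 => absurd h h1⟩
    · obtain ⟨δ, hδ0, hδ⟩ := key_lemma _ (hvnorm p.1 p.2) h
      exact ⟨δ, hδ0, fun θ h1 h2 _ => hδ θ h1 h2⟩
  choose d hd0 hdp using hkey
  have hSne : (S ×ˢ S).Nonempty := ⟨(y, y), Finset.mem_product.2 ⟨hy, hy⟩⟩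
  set m := (S ×ˢ S).inf' hSne d with hm
  have hm0 : 0 < m := by
    rw [hm, Finset.lt_inf'_iff]
    exact fun b _ => hd0 b
  set θ : ℝ := m / 2 with hθ
  have hθ0 : 0 < θ := by positivity
  have hθlt : ∀ p ∈ S ×ˢ S, θ < d p := fun p hp =>
    lt_of_lt_of_le (by linarith) (Finset.inf'_le d hp)
  set u1 : ℂ := Complex.exp (θ * I) with hu1
  set u2 : ℂ := Complex.exp ((-θ : ℝ) * I) with hu2
  have hu1n : ‖u1‖ = 1 := by
    rw [hu1, Complex.norm_exp_ofReal_mul_I]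
  have hu2n : ‖u2‖ = 1 := by
    rw [hu2, Complex.norm_exp_ofReal_mul_I]
  have hu12 : u1⁻¹ = u2 := by
    rw [hu1, hu2, ← Complex.exp_neg]
    push_cast
    ring_nf
  have hu21 : u2⁻¹ = u1 := by rw [← hu12, inv_inv]
  set τ1 : V → ℂ := fun z => if z ∈ A then u1 * τ0 z else τ0 z with hτ1
  set τ2 : V → ℂ := fun z => if z ∈ A then u2 * τ0 z else τ0 z with hτ2
  have hτ1n : ∀ z, ‖τ1 z‖ = 1 := by
    intro z; rw [hτ1]; dsimp only; split_ifs
    · rw [norm_mul, hu1n, hτ0, mul_one]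
    · exact hτ0 z
  have hτ2n : ∀ z, ‖τ2 z‖ = 1 := by
    intro z; rw [hτ2]; dsimp only; split_ifs
    · rw [norm_mul, hu2n, hτ0, mul_one]
    · exact hτ0 z
  -- the pointwise comparison
  have hpoint : ∀ a ∈ S, ∀ b ∈ S,
      (w a b * ‖σ a b * τ1 b - τ1 a‖ + w a b * ‖σ a b * τ2 b - τ2 a‖ ≤
        2 * (w a b * ‖σ a b * τ0 b - τ0 a‖)) ∧
      (w a b ≠ 0 → (a ∈ A ∧ b ∉ A) ∨ (a ∉ A ∧ b ∈ A) →
        w a b * ‖σ a b * τ1 b - τ1 a‖ + w a b * ‖σ a b * τ2 b - τ2 a‖ <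
          2 * (w a b * ‖σ a b * τ0 b - τ0 a‖)) := by
    intro a ha b hb
    have hwpos : w a b = 0 ∨ 0 < w a b := (hw_nn a b).eq_or_lt.imp Eq.symm id
    by_cases haA : a ∈ A <;> by_cases hbA : b ∈ A
    · -- both in A
      have h1 : σ a b * τ1 b - τ1 a = u1 * (σ a b * τ0 b - τ0 a) := by
        simp only [hτ1, haA, hbA, if_pos]; ring
      have h2 : σ a b * τ2 b - τ2 a = u2 * (σ a b * τ0 b - τ0 a) := by
        simp only [hτ2, haA, hbA, if_pos]; ring
      rw [h1, h2]
      simp only [norm_mul, hu1n, hu2n, one_mul]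
      refine ⟨by linarith, fun _ h => ?_⟩
      rcases h with ⟨_, hc⟩ | ⟨hc, _⟩
      · exact absurd hbA hc
      · exact absurd haA hc
    · -- a ∈ A, b ∉ A : crossing
      have h1 : ‖σ a b * τ1 b - τ1 a‖ = ‖vc a b - u1‖ := by
        simp only [hτ1, haA, hbA, if_pos, if_neg, ite_true, ite_false]
        exact hnorm_eq a b u1
      have h2 : ‖σ a b * τ2 b - τ2 a‖ = ‖vc a b - u2‖ := by
        simp only [hτ2, haA, hbA, if_pos, if_neg, ite_true, ite_false]
        exact hnorm_eq a b u2
      have h0 : ‖σ a b * τ0 b - τ0 a‖ = ‖vc a b - 1‖ := by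
        have := hnorm_eq a b 1; rwa [one_mul] at this
      rw [h1, h2, h0]
      rcases hwpos with hw0 | hwp
      · rw [hw0]; simp
      · have hstrict : w a b ≠ 0 → ‖vc a b - u1‖ + ‖vc a b - u2‖ < 2 * ‖vc a b - 1‖ := by
          intro hwab
          have hv1 : vc a b ≠ 1 := fun h =>
            hclosed a haA b hb hbA hwab ((hv1_iff a b).1 h)
          exact hdp (a, b) θ hθ0 (hθlt (a, b) (Finset.mem_product.2 ⟨ha, hb⟩)) hv1
        have := hstrict (ne_of_gt hwp)
        constructor
        · nlinarith
        · intro _ _; nlinarith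
    · -- a ∉ A, b ∈ A : crossing reversed
      have h1 : ‖σ a b * τ1 b - τ1 a‖ = ‖vc a b - u2‖ := by
        simp only [hτ1, haA, hbA, if_pos, if_neg, ite_true, ite_false]
        have hu1u2 : u1 * u2 = 1 := by
          rw [← hu12, mul_inv_cancel₀ (by rw [hu1]; exact Complex.exp_ne_zero _)]
        have : σ a b * (u1 * τ0 b) - τ0 a = u1 * (σ a b * τ0 b - u2 * τ0 a) := by
          linear_combination τ0 a * hu1u2
        rw [this, norm_mul, hu1n, one_mul]
        exact hnorm_eq a b u2
      have h2 : ‖σ a b * τ2 b - τ2 a‖ = ‖vc a b - u1‖ := by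
        simp only [hτ2, haA, hbA, if_pos, if_neg, ite_true, ite_false]
        have hu2u1 : u2 * u1 = 1 := by
          rw [← hu21, mul_inv_cancel₀ (by rw [hu2]; exact Complex.exp_ne_zero _)]
        have : σ a b * (u2 * τ0 b) - τ0 a = u2 * (σ a b * τ0 b - u1 * τ0 a) := by
          linear_combination τ0 a * hu2u1
        rw [this, norm_mul, hu2n, one_mul]
        exact hnorm_eq a b u1
      have h0 : ‖σ a b * τ0 b - τ0 a‖ = ‖vc a b - 1‖ := by
        have := hnorm_eq a b 1; rwa [one_mul] at this
      rw [h1, h2, h0]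
      rcases hwpos with hw0 | hwp
      · rw [hw0]; simp
      · have hstrict : ‖vc a b - u1‖ + ‖vc a b - u2‖ < 2 * ‖vc a b - 1‖ := by
          have hv1 : vc a b ≠ 1 := hrev a b haA ha hbA (ne_of_gt hwp)
          exact hdp (a, b) θ hθ0 (hθlt (a, b) (Finset.mem_product.2 ⟨ha, hb⟩)) hv1
        constructor
        · nlinarith
        · intro _ _; nlinarith
    · -- both outside A
      have h1 : σ a b * τ1 b - τ1 a = σ a b * τ0 b - τ0 a := by
        simp only [hτ1, haA, hbA, if_neg, ite_false]
      have h2 : σ a b * τ2 b - τ2 a = σ a b * τ0 b - τ0 a := by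
        simp only [hτ2, haA, hbA, if_neg, ite_false]
      rw [h1, h2]
      refine ⟨by linarith, fun _ h => ?_⟩
      rcases h with ⟨hc, _⟩ | ⟨_, hc⟩
      · exact absurd hc haA
      · exact absurd hc hbA
  -- sum the comparison
  have hsum : ∑ p ∈ S ×ˢ S, (w p.1 p.2 * ‖σ p.1 p.2 * τ1 p.2 - τ1 p.1‖ +
        w p.1 p.2 * ‖σ p.1 p.2 * τ2 p.2 - τ2 p.1‖) <
      ∑ p ∈ S ×ˢ S, 2 * (w p.1 p.2 * ‖σ p.1 p.2 * τ0 p.2 - τ0 p.1‖) := by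
    apply Finset.sum_lt_sum
    · intro p hp
      obtain ⟨h1, h2⟩ := Finset.mem_product.1 hp
      exact (hpoint p.1 h1 p.2 h2).1
    · refine ⟨(x, y), Finset.mem_product.2 ⟨hA hx, hy⟩, ?_⟩
      exact (hpoint x (hA hx) y hy).2 hw (Or.inl ⟨hx, hyA⟩)
  have hF : ∀ τ : V → ℂ, frustVal w σ S τ =
      (1 / 2) * ∑ p ∈ S ×ˢ S, w p.1 p.2 * ‖σ p.1 p.2 * τ p.2 - τ p.1‖ := by
    intro τ
    rw [frustVal, Finset.sum_product]
  have hlt : frustVal w σ S τ1 + frustVal w σ S τ2 < 2 * frustVal w σ S τ0 := by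
    rw [hF τ1, hF τ2, hF τ0]
    rw [Finset.sum_add_distrib] at hsum
    rw [← Finset.mul_sum] at hsum
    linarith
  have h1 := hmin τ1 hτ1n
  have h2 := hmin τ2 hτ2n
  linarith


lemma exists_tree_le {W : Type*} [Fintype W] :
    ∀ (n : ℕ) (H : SimpleGraph W), H.edgeSet.ncard ≤ n → H.Connected →
      ∃ T : SimpleGraph W, T ≤ H ∧ T.IsTree := by
  intro n
  induction n with
  | zero =>
    intro H hcard hH
    have hempty : H.edgeSet = ∅ :=
      (Set.ncard_eq_zero (Set.toFinite H.edgeSet)).1 (Nat.le_zero.1 hcard)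
    have hbot : H = ⊥ := SimpleGraph.edgeSet_eq_empty.1 hempty
    exact ⟨H, le_rfl, hH, hbot ▸ SimpleGraph.isAcyclic_bot⟩
  | succ n ih =>
    intro H hcard hH
    by_cases hac : H.IsAcyclic
    · exact ⟨H, le_rfl, hH, hac⟩
    · rw [isAcyclic_iff_forall_adj_isBridge] at hac
      push_neg at hac
      obtain ⟨v, w', hadj, hnb⟩ := hac
      have hreach : (H \ fromEdgeSet {s(v, w')}).Reachable v w' := by
        by_contra h'
        exact hnb h'
      set G := H \ fromEdgeSet {s(v, w')} with hG
      have hGle : G ≤ H := sdiff_le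
      have hkey : ∀ x y, H.Adj x y → G.Reachable x y := by
        intro x y hxy
        by_cases he : s(x, y) = s(v, w')
        · rw [Sym2.eq_iff] at he
          rcases he with ⟨rfl, rfl⟩ | ⟨rfl, rfl⟩
          · exact hreach
          · exact hreach.symm
        · refine Adj.reachable ?_
          rw [hG, sdiff_adj, fromEdgeSet_adj]
          exact ⟨hxy, fun h => he h.1⟩
      have hGconn : G.Connected := by
        have hpre : G.Preconnected := by
          intro x y
          obtain ⟨p⟩ := hH.preconnected x y
          induction p with
          | nil => exact Reachable.refl _
          | cons h q ih' => exact (hkey _ _ h).trans ih'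
        rw [connected_iff]
        exact ⟨hpre, hH.nonempty⟩
      have hmem : s(v, w') ∈ H.edgeSet := hadj
      have hnot : s(v, w') ∉ G.edgeSet := by
        rw [hG]
        simp [fromEdgeSet_adj, hadj, hadj.ne]
      have hcard' : G.edgeSet.ncard ≤ n := by
        have hss : G.edgeSet ⊂ H.edgeSet :=
          ⟨edgeSet_mono hGle, fun h => hnot (h hmem)⟩
        have := Set.ncard_lt_ncard hss (Set.toFinite _)
        omega
      obtain ⟨T, hT, ht⟩ := ih G hcard' hGconn
      exact ⟨T, hT.trans hGle, ht⟩

/-- If `τ₀ : S → U(1)` attains the frustration index of a connected subset `S`,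
then there is a spanning tree `T` of the induced subgraph on `S` on which `τ₀`
is constant with respect to `σ`. -/
theorem minimizer_constant_on_spanning_tree
    (w : V → V → ℝ) (σ : V → V → ℂ)
    (hw_symm : ∀ x y, w x y = w y x)
    (hw_nn : ∀ x y, 0 ≤ w x y)
    (hw_loop : ∀ x, w x x = 0)
    (hσu : ∀ x y, ‖σ x y‖ = 1)
    (hσs : ∀ x y, σ y x = (σ x y)⁻¹)
    (S : Finset V) (hS : S.Nonempty) (hconn : ConnOn w S)
    (τ0 : V → ℂ) (hτ0 : ∀ x, ‖τ0 x‖ = 1)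
    (hmin : ∀ τ : V → ℂ, (∀ x, ‖τ x‖ = 1) →
      frustVal w σ S τ0 ≤ frustVal w σ S τ) :
    ∃ T : SimpleGraph {x : V // x ∈ S},
      T.IsTree ∧
      (∀ a b : {x : V // x ∈ S}, T.Adj a b → w a.1 b.1 ≠ 0) ∧
      ∀ a b : {x : V // x ∈ S}, T.Adj a b → σ a.1 b.1 * τ0 b.1 = τ0 a.1 := by
  classical
  have hσne : ∀ a b, σ a b ≠ 0 := fun a b =>
    norm_ne_zero_iff.1 (by rw [hσu]; exact one_ne_zero)
  -- the graph of satisfied edges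
  set H : SimpleGraph {x : V // x ∈ S} :=
    { Adj := fun a b => a ≠ b ∧ w a.1 b.1 ≠ 0 ∧ σ a.1 b.1 * τ0 b.1 = τ0 a.1
      symm := ⟨by
        rintro a b ⟨hne, hwab, hs⟩
        refine ⟨hne.symm, by rw [← hw_symm]; exact hwab, ?_⟩
        rw [hσs, ← hs]
        field_simp [hσne a.1 b.1]⟩
      loopless := ⟨fun a h => h.1 rfl⟩ } with hH
  have hadjH : ∀ a b : {x : V // x ∈ S},
      H.Adj a b ↔ a ≠ b ∧ w a.1 b.1 ≠ 0 ∧ σ a.1 b.1 * τ0 b.1 = τ0 a.1 := fun a b => Iff.rfl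
  have hpre : H.Preconnected := by
    intro a b
    have hrtg := hconn a.1 a.2 b.1 b.2
    have main : ∀ z, Relation.ReflTransGen
        (fun a b => a ∈ S ∧ b ∈ S ∧ a ≠ b ∧ w a b ≠ 0) a.1 z →
        ∀ hz : z ∈ S, H.Reachable a ⟨z, hz⟩ := by
      intro z hz
      induction hz with
      | refl =>
        intro hz
        have : (⟨a.1, hz⟩ : {x : V // x ∈ S}) = a := Subtype.ext rfl
        rw [this]
      | @tail p q hap hstep ih =>
        intro hq
        obtain ⟨hpS, hqS, hpq, hwpq⟩ := hstep
        by_contra hnr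
        set A : Finset V := S.filter (fun z => ∃ hz : z ∈ S, H.Reachable a ⟨z, hz⟩) with hAdef
        have hpA : p ∈ A := Finset.mem_filter.2 ⟨hpS, hpS, ih hpS⟩
        have hqA : q ∉ A := by
          intro hmem
          obtain ⟨_, hz, hr⟩ := Finset.mem_filter.1 hmem
          exact hnr (by convert hr using 2)
        refine no_bad_cut w σ hw_symm hw_nn hσu hσs S τ0 hτ0 hmin A
          (Finset.filter_subset _ _) ?_ hpA hqS hqA hwpq
        intro z hzA y' hy'S hy'A hwzy hsat
        apply hy'A
        obtain ⟨hzS, hz2, hr⟩ := Finset.mem_filter.1 hzA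
        have hzne : z ≠ y' := by
          rintro rfl
          exact hwzy (hw_loop z)
        have hadj : H.Adj ⟨z, hz2⟩ ⟨y', hy'S⟩ :=
          ⟨by simpa [Subtype.ext_iff] using hzne, hwzy, hsat⟩
        exact Finset.mem_filter.2 ⟨hy'S, hy'S, (by convert hr.trans hadj.reachable using 2)⟩
    exact main b.1 hrtg b.2
  have hne : Nonempty {x : V // x ∈ S} := ⟨⟨hS.choose, hS.choose_spec⟩⟩
  have hconnH : H.Connected := by
    rw [SimpleGraph.connected_iff]
    exact ⟨hpre, hne⟩
  obtain ⟨T, hTH, hTree⟩ := exists_tree_le H.edgeSet.ncard H le_rfl hconnH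
  refine ⟨T, hTree, fun a b h => ((hadjH a b).1 (hTH h)).2.1,
    fun a b h => ((hadjH a b).1 (hTH h)).2.2⟩
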